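/- Let A ∈ O(d+2,2) commute with Z₀ (i.e., A belongs to the Schrödinger group), with block form A = [[L, aξ, C],[B*, b, d],[−aξ*, 0, e]]. Then the entries satisfy: Lξ = eξ, L*ξ = bξ, L*L = 1 + a(ξB* + Bξ*), L*C − adξ + eB = 0, aξ*C + be = 1, ξ*(B + C) = 0, and C*C + 2de = 0, where L* denotes the g-adjoint of L. -/
import Mathlib


/-- Extended (Bargmann) space `ℝ^{d+2}` with coordinates `(x¹,…,x^d,t,s)`. -/
abbrev BSpace (d : ℕ) := Fin (d+2) → ℝ

/-- Index of the time coordinate `t = x^{d+1}`. -/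
def tIdx (d : ℕ) : Fin (d+2) := ⟨d, by omega⟩

/-- Index of the vertical coordinate `s = x^{d+2}`. -/
def sIdx (d : ℕ) : Fin (d+2) := ⟨d+1, by omega⟩

/-- Flat Bargmann metric `g = Σᵢ (dxⁱ)² + 2dt⊙ds` on `ℝ^{d+2}`. -/
def gB (d : ℕ) (x y : BSpace d) : ℝ :=
  (∑ i : Fin d, x (Fin.castAdd 2 i) * y (Fin.castAdd 2 i))
    + x (tIdx d) * y (sIdx d) + x (sIdx d) * y (tIdx d)

/-- The null vector `ξ = ∂/∂s`. -/
noncomputable def ξB (d : ℕ) : BSpace d := Pi.single (sIdx d) 1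

/-- Ambient space `ℝ^{d+2,2} = ℝ^{d+2} ⊕ ℝ²`. -/
abbrev ASpace (d : ℕ) := BSpace d × ℝ × ℝ

/-- Ambient metric `G` with Gram matrix `[[g,0,0],[0,0,1],[0,1,0]]`. -/
def GA (d : ℕ) (u v : ASpace d) : ℝ :=
  gB d u.1 v.1 + u.2.1 * v.2.2 + u.2.2 * v.2.1

/-- The special null element `Z₀ = [[0,0,ξ],[−ξ*,0,0],[0,0,0]]` of `o(d+2,2)`:
`Z₀(x,a,b) = (bξ, −θ(x), 0)` with `θ = g(ξ,·)`. -/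
noncomputable def Z0 (d : ℕ) (u : ASpace d) : ASpace d :=
  (u.2.2 • ξB d, -gB d (ξB d) u.1, 0)


lemma gB_symm (d : ℕ) (x y : BSpace d) : gB d x y = gB d y x := by
  unfold gB
  rw [Finset.sum_congr rfl (fun i _ => mul_comm (x _) (y _))]
  ring

lemma gB_add_right (d : ℕ) (x y z : BSpace d) :
    gB d x (y + z) = gB d x y + gB d x z := by
  simp only [gB, Pi.add_apply, mul_add, Finset.sum_add_distrib]
  ring

lemma gB_smul_right (d : ℕ) (c : ℝ) (x y : BSpace d) :
    gB d x (c • y) = c * gB d x y := by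
  simp only [gB, Pi.smul_apply, smul_eq_mul, mul_left_comm _ c, mul_add, Finset.mul_sum]

lemma gB_zero_right (d : ℕ) (x : BSpace d) : gB d x 0 = 0 := by
  simp [gB]

lemma gB_single_t (d : ℕ) (v : BSpace d) :
    gB d (Pi.single (tIdx d) 1) v = v (sIdx d) := by
  simp [gB, Pi.single_apply, tIdx, sIdx, Fin.ext_iff, Fin.val_ne_of_ne]
  exact Finset.sum_eq_zero fun x _ => by simp [Nat.ne_of_lt x.isLt]

lemma gB_xi (d : ℕ) (v : BSpace d) :
    gB d (ξB d) v = v (tIdx d) := by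
  simp [gB, ξB, Pi.single_apply, tIdx, sIdx, Fin.ext_iff]
  exact Finset.sum_eq_zero fun x _ => by simp [show (x:ℕ) ≠ d+1 by omega]

lemma gB_single_lt (d : ℕ) (i : Fin d) (v : BSpace d) :
    gB d (Pi.single (Fin.castAdd 2 i) 1) v = v (Fin.castAdd 2 i) := by
  simp [gB, Pi.single_apply, tIdx, sIdx, Fin.ext_iff,
    show d ≠ (i:ℕ) by omega, show d+1 ≠ (i:ℕ) by omega]
  rw [Finset.sum_eq_single i (fun x _ hx => by rw [if_neg (fun h => hx (Fin.ext h))])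
    (by simp)]
  simp
lemma gB_xi_xi (d : ℕ) : gB d (ξB d) (ξB d) = 0 := by
  rw [gB_xi]
  simp [ξB, tIdx, sIdx, Pi.single_apply, Fin.ext_iff]

lemma gB_sub_right (d : ℕ) (x y z : BSpace d) :
    gB d x (y - z) = gB d x y - gB d x z := by
  rw [sub_eq_add_neg, gB_add_right, show -z = (-1:ℝ) • z by simp, gB_smul_right]
  ring

lemma gB_smul_left (d : ℕ) (c : ℝ) (x y : BSpace d) :
    gB d (c • x) y = c * gB d x y := by
  rw [gB_symm, gB_smul_right, gB_symm]

lemma gB_ext (d : ℕ) {u v : BSpace d} (h : ∀ x, gB d x u = gB d x v) : u = v := by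
  funext j
  rcases lt_trichotomy (j : ℕ) d with hj | hj | hj
  · have hji : j = Fin.castAdd 2 ⟨j, hj⟩ := Fin.ext rfl
    rw [hji]
    have hh := h (Pi.single (Fin.castAdd 2 ⟨(j:ℕ), hj⟩) 1)
    rw [gB_single_lt, gB_single_lt] at hh
    exact hh
  · have hji : j = tIdx d := Fin.ext hj
    rw [hji]
    simpa [gB_xi] using h (ξB d)
  · have hji : j = sIdx d := Fin.ext (by have := j.isLt; simp [sIdx]; omega)
    rw [hji]
    simpa [gB_single_t] using h (Pi.single (tIdx d) 1)

/-- an element `A ∈ O(d+2,2)` commuting with `Z₀` (i.e. an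
element of the Schrödinger group), written in the block form
`A = [[L, aξ, C],[B*, b, d],[−aξ*, 0, e]]`, has entries satisfying the seven
relations `Lξ = eξ`, `L*ξ = bξ`, `L*L = 1 + a(ξB* + Bξ*)`,
`L*C − adξ + eB = 0`, `aξ*C + be = 1`, `ξ*(B+C) = 0`, `C*C + 2de = 0`. -/
theorem schroedinger_group_block_relations (d : ℕ)
    (A : ASpace d → ASpace d)
    (hlin : IsLinearMap ℝ A)
    (hiso : ∀ u v : ASpace d, GA d (A u) (A v) = GA d u v)
    (hcomm : ∀ w : ASpace d, A (Z0 d w) = Z0 d (A w))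
    (L Lstar : BSpace d →ₗ[ℝ] BSpace d)
    (hadj : ∀ u v : BSpace d, gB d (L u) v = gB d u (Lstar v))
    (B C : BSpace d) (a b dd e : ℝ)
    (hblock : ∀ (x : BSpace d) (α β : ℝ),
      A (x, α, β) =
        (L x + (a * α) • ξB d + β • C,
         gB d B x + b * α + dd * β,
         -(a * gB d (ξB d) x) + e * β)) :
    L (ξB d) = e • ξB d
    ∧ Lstar (ξB d) = b • ξB d
    ∧ (∀ u : BSpace d, Lstar (L u) = u + (a * gB d B u) • ξB d + (a * gB d (ξB d) u) • B)
    ∧ Lstar C - (a * dd) • ξB d + e • B = 0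
    ∧ a * gB d (ξB d) C + b * e = 1
    ∧ gB d (ξB d) (B + C) = 0
    ∧ gB d C C + 2 * dd * e = 0 := by
  have symm := gB_symm d
  have hζ := gB_xi_xi d
  -- A at basic points
  have hA1 : A ((0:BSpace d), (0:ℝ), (1:ℝ)) = (C, dd, e) := by
    rw [hblock]; simp [gB_zero_right]
  have hAxi : A (ξB d, (0:ℝ), (0:ℝ)) = (L (ξB d), gB d B (ξB d), 0) := by
    rw [hblock]; simp [hζ]
  -- commutation at (0,0,1)
  have e1 : (L (ξB d), gB d B (ξB d), (0:ℝ)) = (e • ξB d, -gB d (ξB d) C, 0) := by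
    have h := hcomm ((0:BSpace d), (0:ℝ), (1:ℝ))
    rw [show Z0 d ((0:BSpace d),(0:ℝ),(1:ℝ)) = (ξB d, 0, 0) from by
      simp [Z0, gB_zero_right], hAxi, hA1] at h
    simpa [Z0] using h
  have r1 : L (ξB d) = e • ξB d := congrArg Prod.fst e1
  have r6' : gB d B (ξB d) = -gB d (ξB d) C := congrArg (fun p => p.2.1) e1
  have r6 : gB d (ξB d) (B + C) = 0 := by
    rw [gB_add_right]
    have := symm (ξB d) B
    rw [symm B (ξB d)] at r6'
    linarith
  -- commutation at (x,0,0)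
  have e2 : ∀ x : BSpace d, gB d (ξB d) (L x) = b * gB d (ξB d) x := by
    intro x
    have h := hcomm (x, (0:ℝ), (0:ℝ))
    rw [show Z0 d (x,(0:ℝ),(0:ℝ)) = ((0:BSpace d), -gB d (ξB d) x, 0) from by
      simp [Z0], hblock, hblock] at h
    have h2 := congrArg (fun p => p.2.1) h
    simp [Z0, gB_zero_right, gB_add_right, gB_smul_right, hζ] at h2
    linarith
  have r2 : Lstar (ξB d) = b • ξB d := by
    apply gB_ext d
    intro x
    rw [← hadj, gB_smul_right, symm (L x) (ξB d), e2, symm (ξB d) x]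
  -- isometry (x,0,0),(y,0,0)
  have r3 : ∀ u : BSpace d,
      Lstar (L u) = u + (a * gB d B u) • ξB d + (a * gB d (ξB d) u) • B := by
    intro u
    apply gB_ext d
    intro x
    have h := hiso (x, (0:ℝ), (0:ℝ)) (u, (0:ℝ), (0:ℝ))
    rw [hblock, hblock] at h
    simp [GA, gB_zero_right] at h
    rw [← hadj, gB_add_right, gB_add_right, gB_smul_right, gB_smul_right,
      symm x (ξB d), symm x B]
    nlinarith [h]
  -- isometry (x,0,0),(0,0,1)
  have r4 : Lstar C - (a * dd) • ξB d + e • B = 0 := by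
    apply gB_ext d
    intro x
    rw [gB_zero_right, gB_add_right, gB_sub_right, gB_smul_right, gB_smul_right,
      ← hadj, symm x (ξB d), symm x B]
    have h := hiso (x, (0:ℝ), (0:ℝ)) ((0:BSpace d), (0:ℝ), (1:ℝ))
    rw [hblock, hblock] at h
    simp [GA, gB_zero_right] at h
    nlinarith [h]
  -- isometry (0,1,0),(0,0,1)
  have r5 : a * gB d (ξB d) C + b * e = 1 := by
    have h := hiso ((0:BSpace d), (1:ℝ), (0:ℝ)) ((0:BSpace d), (0:ℝ), (1:ℝ))
    rw [hblock, hblock] at h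
    simp [GA, gB_zero_right, gB_smul_left] at h
    linarith
  -- isometry (0,0,1),(0,0,1)
  have r7 : gB d C C + 2 * dd * e = 0 := by
    have h := hiso ((0:BSpace d), (0:ℝ), (1:ℝ)) ((0:BSpace d), (0:ℝ), (1:ℝ))
    rw [hblock] at h
    simp [GA, gB_zero_right] at h
    linarith
  exact ⟨r1, r2, r3, r4, r5, r6, r7⟩
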